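/- arXiv:math/0610972 — 4 statements merged into one kernel-verified Lean document; each statement's English description precedes it below -/
import Mathlib

section
/- Every integer matrix M ∈ GL₂(ℤ) satisfying Mᵀ·Q₃·M = Q₃, where Q₃ = [[2,3],[3,-2]], has the form P±_{(a,b)} = [[(11b∓3a)/2, (-3b±a)/2],[(-3b±a)/2, b]] or Q±_{(a,b)} = [[-b, (-3b∓a)/2],[(-3b±a)/2, b]] for some integer solution (a,b) of a^2 - 13b^2 = -4. -/
open Matrix

/-- Every M ∈ GL₂(ℤ) with MᵀQ₃M = Q₃, Q₃ = [[2,3],[3,-2]], is of the form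
P±_{(a,b)} or Q±_{(a,b)} for an integer solution (a,b) of a² - 13b² = -4.
(Equalities are stated after clearing the denominator 2.) -/
theorem stmt_5 :
    ∀ M : Matrix (Fin 2) (Fin 2) ℤ, IsUnit M.det →
      Mᵀ * !![2, 3; 3, -2] * M = !![2, 3; 3, -2] →
      ∃ a b : ℤ, a^2 - 13*b^2 = -4 ∧
        ((2:ℤ) • M = !![11*b - 3*a, -3*b + a; -3*b + a, 2*b] ∨
         (2:ℤ) • M = !![11*b + 3*a, -3*b - a; -3*b - a, 2*b] ∨
         (2:ℤ) • M = !![-2*b, -3*b - a; -3*b + a, 2*b] ∨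
         (2:ℤ) • M = !![-2*b, -3*b + a; -3*b - a, 2*b]) := by
  intro M hu hM
  rw [Int.isUnit_iff] at hu
  have key : M.det • (Mᵀ * !![2,3;3,-2]) = !![2,3;3,-2] * M.adjugate := by
    calc M.det • (Mᵀ * !![2,3;3,-2])
        = Mᵀ * !![2,3;3,-2] * (M.det • (1:Matrix (Fin 2) (Fin 2) ℤ)) := by
          rw [Matrix.mul_smul, Matrix.mul_one]
      _ = Mᵀ * !![2,3;3,-2] * (M * M.adjugate) := by rw [Matrix.mul_adjugate]
      _ = (Mᵀ * !![2,3;3,-2] * M) * M.adjugate := by rw [← Matrix.mul_assoc]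
      _ = _ := by rw [hM]
  set p := M 0 0 with hp
  set q := M 0 1 with hq
  set r := M 1 0 with hr
  set s := M 1 1 with hs
  have hdet : M.det = p*s - q*r := Matrix.det_fin_two M
  have hMe : M = !![p,q;r,s] := Matrix.eta_fin_two M
  -- quadratic equation from (1,1) entry of hM
  have eB : q^2 + 3*q*s - s^2 = -1 := by
    have e := congrFun (congrFun hM 1) 1
    simp [hMe, Matrix.mul_apply, Fin.sum_univ_two, Matrix.vecHead, Matrix.vecTail] at e
    ring_nf at e ⊢
    linarith
  -- linear equations from key
  have k00 := congrFun (congrFun key 0) 0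
  have k10 := congrFun (congrFun key 1) 0
  simp [hMe, Matrix.adjugate_fin_two, Matrix.mul_apply, Fin.sum_univ_two, Matrix.vecHead, Matrix.vecTail, hdet] at k00 k10
  rcases hu with hd | hd
  · rw [hdet] at hd
    rw [hd, one_mul] at k00 k10
    refine ⟨2*q+3*s, s, by linear_combination 4*eB, Or.inl ?_⟩
    rw [hMe]
    ext i j
    fin_cases i <;> fin_cases j <;>
      simp [Matrix.smul_apply] <;> linarith [hd, k00, k10]
  · rw [hdet] at hd
    rw [hd, neg_one_mul] at k00 k10
    refine ⟨2*q+3*s, s, by linear_combination 4*eB, Or.inr (Or.inr (Or.inr ?_))⟩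
    rw [hMe]
    ext i j
    fin_cases i <;> fin_cases j <;>
      simp [Matrix.smul_apply] <;> linarith [hd, k00, k10]
end

section
/- Among all isometries M of the lattice with Gram matrix [[2,3],[3,-2]], the only nontrivial one mapping the open cone C = {(x,y) ∈ ℝ² : 3x - 2y > 0 and 3x + 11y > 0} to itself is M = [[1,3],[0,-1]] (which equals minus the involution Q⁻₀), and it is an involution; hence the subgroup of O(L₃) preserving this cone is isomorphic to ℤ/2. -/
open Matrix

/-- The Kähler cone of X₃: {(x,y) ∈ ℝ² : 3x - 2y > 0 and 3x + 11y > 0}. -/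
def kaehlerCone3 : Set (Fin 2 → ℝ) :=
  {v | 3 * v 0 - 2 * v 1 > 0 ∧ 3 * v 0 + 11 * v 1 > 0}

/-- aux -/
lemma solveQ (p q : ℤ) (h : p^2 + 3*p*q - q^2 = 13) (h1 : 0 ≤ 3*p - 2*q)
    (h2 : 0 ≤ 3*p + 11*q) : (p = 2 ∧ q = 3) ∨ (p = 11 ∧ q = -3) := by
  have hq2 : q^2 ≤ 9 := by nlinarith [mul_nonneg h1 h2]
  have hq1 : -3 ≤ q := by nlinarith
  have hq3 : q ≤ 3 := by nlinarith
  have hp0 : 0 ≤ p := by linarith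
  have hp1 : p ≤ 11 := by nlinarith
  interval_cases p <;> interval_cases q <;> omega

lemma stepU (X u w : ℤ) (hu : 0 < u) (hw : 0 < w) (h : 0 < u*w*X + u) : 0 ≤ X := by
  by_contra hX
  push_neg at hX
  have hX' : X ≤ -1 := by omega
  nlinarith [mul_le_mul_of_nonneg_left hX' (mul_pos hu hw).le,
    mul_le_mul_of_nonneg_left (show (1:ℤ) ≤ w by omega) hu.le]

lemma stepW (X u w : ℤ) (hu : 0 < u) (hw : 0 < w) (h : 0 < u*w*X + w) : 0 ≤ X := by
  by_contra hX
  push_neg at hX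
  have hX' : X ≤ -1 := by omega
  nlinarith [mul_le_mul_of_nonneg_left hX' (mul_pos hu hw).le,
    mul_le_mul_of_nonneg_right (show (1:ℤ) ≤ u by omega) hw.le]

lemma classify (a b c d : ℤ)
    (e1 : a^2 + 3*a*c - c^2 = 1) (e2 : b^2 + 3*b*d - d^2 = -1)
    (e3 : 2*a*b + 3*a*d + 3*b*c - 2*c*d = 3)
    (A1 : 0 ≤ 3*(2*a+3*b) - 2*(2*c+3*d)) (A2 : 0 ≤ 3*(2*a+3*b) + 11*(2*c+3*d))
    (B1 : 0 ≤ 3*(11*a-3*b) - 2*(11*c-3*d)) (B2 : 0 ≤ 3*(11*a-3*b) + 11*(11*c-3*d)) :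
    (a = 1 ∧ b = 0 ∧ c = 0 ∧ d = 1) ∨ (a = 1 ∧ b = 3 ∧ c = 0 ∧ d = -1) := by
  have D1 : (2*a+3*b)^2 + 3*(2*a+3*b)*(2*c+3*d) - (2*c+3*d)^2 = 13 := by
    linear_combination 4*e1 + 6*e3 + 9*e2
  have D2 : (11*a-3*b)^2 + 3*(11*a-3*b)*(11*c-3*d) - (11*c-3*d)^2 = 13 := by
    linear_combination 121*e1 - 33*e3 + 9*e2
  have D3 : 2*(2*a+3*b)*(11*a-3*b) + 3*((2*a+3*b)*(11*c-3*d) + (2*c+3*d)*(11*a-3*b))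
      - 2*(2*c+3*d)*(11*c-3*d) = 143 := by
    linear_combination 44*e1 + 27*e3 - 18*e2
  have S1 := solveQ _ _ D1 A1 A2
  have S2 := solveQ _ _ D2 B1 B2
  rcases S1 with ⟨hp, hq⟩ | ⟨hp, hq⟩ <;> rcases S2 with ⟨hr, hs⟩ | ⟨hr, hs⟩ <;>
    rw [hp, hq, hr, hs] at D3 <;> omega

lemma mainAux (M : Matrix (Fin 2) (Fin 2) ℤ) (hdet : IsUnit M.det)
    (hQ : Mᵀ * !![2, 3; 3, -2] * M = !![2, 3; 3, -2])
    (hC : ∀ v ∈ kaehlerCone3, (M.map (Int.cast : ℤ → ℝ)).mulVec v ∈ kaehlerCone3) :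
    M = 1 ∨ M = !![1, 3; 0, -1] := by
  set a := M 0 0 with ha
  set b := M 0 1 with hb
  set c := M 1 0 with hc
  set d := M 1 1 with hd
  have h00 := congrFun (congrFun hQ 0) 0
  have h01 := congrFun (congrFun hQ 0) 1
  have h11 := congrFun (congrFun hQ 1) 1
  simp [Matrix.mul_apply, Fin.sum_univ_two, Matrix.transpose_apply] at h00 h01 h11
  have e1 : a^2 + 3*a*c - c^2 = 1 := by ring_nf; ring_nf at h00; linarith
  have e2 : b^2 + 3*b*d - d^2 = -1 := by ring_nf; ring_nf at h11; linarith
  have e3 : 2*a*b + 3*a*d + 3*b*c - 2*c*d = 3 := by ring_nf; ring_nf at h01; linarith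
  have hv := hC ![1, 0] (by constructor <;> norm_num [kaehlerCone3])
  simp [kaehlerCone3, Matrix.mulVec, dotProduct, Fin.sum_univ_two] at hv
  have hu : 0 < 3*a - 2*c := by
    have h2 : (0:ℝ) < ((3*a - 2*c : ℤ) : ℝ) := by push_cast; linarith [hv.1]
    exact_mod_cast h2
  have hw : 0 < 3*a + 11*c := by
    have h2 : (0:ℝ) < ((3*a + 11*c : ℤ) : ℝ) := by push_cast; linarith [hv.2]
    exact_mod_cast h2
  set m : ℤ := (3*a - 2*c) * (3*a + 11*c) with hm
  have hm1 : 1 ≤ m := by nlinarith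
  have hmR : (1:ℝ) ≤ (m:ℝ) := by exact_mod_cast hm1
  have hv1 := hC ![2*(m:ℝ)+1, 3*(m:ℝ)]
    (by constructor <;> (simp [kaehlerCone3]; nlinarith))
  simp [kaehlerCone3, Matrix.mulVec, dotProduct, Fin.sum_univ_two] at hv1
  have hv2 := hC ![11*(m:ℝ)+1, -(3*(m:ℝ))]
    (by constructor <;> (simp [kaehlerCone3]; nlinarith))
  simp [kaehlerCone3, Matrix.mulVec, dotProduct, Fin.sum_univ_two] at hv2
  have i1 : 0 < (3*a-2*c)*(3*a+11*c) * (3*(2*a+3*b) - 2*(2*c+3*d)) + (3*a-2*c) := by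
    have h := hv1.1
    have h2 : (0:ℝ) < (((3*a-2*c)*(3*a+11*c) * (3*(2*a+3*b) - 2*(2*c+3*d)) + (3*a-2*c) : ℤ) : ℝ) := by
      push_cast [hm] at h ⊢; ring_nf; ring_nf at h; linarith
    exact_mod_cast h2
  have i2 : 0 < (3*a-2*c)*(3*a+11*c) * (3*(2*a+3*b) + 11*(2*c+3*d)) + (3*a+11*c) := by
    have h := hv1.2
    have h2 : (0:ℝ) < (((3*a-2*c)*(3*a+11*c) * (3*(2*a+3*b) + 11*(2*c+3*d)) + (3*a+11*c) : ℤ) : ℝ) := by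
      push_cast [hm] at h ⊢; ring_nf; ring_nf at h; linarith
    exact_mod_cast h2
  have i3 : 0 < (3*a-2*c)*(3*a+11*c) * (3*(11*a-3*b) - 2*(11*c-3*d)) + (3*a-2*c) := by
    have h := hv2.1
    have h2 : (0:ℝ) < (((3*a-2*c)*(3*a+11*c) * (3*(11*a-3*b) - 2*(11*c-3*d)) + (3*a-2*c) : ℤ) : ℝ) := by
      push_cast [hm] at h ⊢; ring_nf; ring_nf at h; linarith
    exact_mod_cast h2
  have i4 : 0 < (3*a-2*c)*(3*a+11*c) * (3*(11*a-3*b) + 11*(11*c-3*d)) + (3*a+11*c) := by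
    have h := hv2.2
    have h2 : (0:ℝ) < (((3*a-2*c)*(3*a+11*c) * (3*(11*a-3*b) + 11*(11*c-3*d)) + (3*a+11*c) : ℤ) : ℝ) := by
      push_cast [hm] at h ⊢; ring_nf; ring_nf at h; linarith
    exact_mod_cast h2
  have A1 := stepU _ _ _ hu hw i1
  have A2 := stepW _ _ _ hu hw i2
  have B1 := stepU _ _ _ hu hw i3
  have B2 := stepW _ _ _ hu hw i4
  rcases classify a b c d e1 e2 e3 A1 A2 B1 B2 with ⟨h1, h2, h3, h4⟩ | ⟨h1, h2, h3, h4⟩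
  · left
    ext i j
    fin_cases i <;> fin_cases j <;> simp [Matrix.one_apply] <;> omega
  · right
    ext i j
    fin_cases i <;> fin_cases j <;> simp <;> omega


/-- Among all isometries of the lattice [[2,3],[3,-2]], the only nontrivial one
mapping the cone C to itself is [[1,3],[0,-1]] = -Q⁻₀, which is an involution;
so the cone-preserving isometries form a group isomorphic to ℤ/2. -/
theorem stmt_8 :
    (∀ M : Matrix (Fin 2) (Fin 2) ℤ, IsUnit M.det →
      Mᵀ * !![2, 3; 3, -2] * M = !![2, 3; 3, -2] →
      (∀ v ∈ kaehlerCone3, (M.map (Int.cast : ℤ → ℝ)).mulVec v ∈ kaehlerCone3) →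
      M = 1 ∨ M = !![1, 3; 0, -1]) ∧
    (IsUnit (!![1, 3; 0, -1] : Matrix (Fin 2) (Fin 2) ℤ).det ∧
      (!![1, 3; 0, -1] : Matrix (Fin 2) (Fin 2) ℤ)ᵀ * !![2, 3; 3, -2] * !![1, 3; 0, -1]
        = !![2, 3; 3, -2] ∧
      (∀ v ∈ kaehlerCone3,
        ((!![1, 3; 0, -1] : Matrix (Fin 2) (Fin 2) ℤ).map (Int.cast : ℤ → ℝ)).mulVec v
          ∈ kaehlerCone3) ∧
      (!![1, 3; 0, -1] : Matrix (Fin 2) (Fin 2) ℤ) * !![1, 3; 0, -1] = 1 ∧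
      (!![1, 3; 0, -1] : Matrix (Fin 2) (Fin 2) ℤ) ≠ 1) := by
  refine ⟨fun M hdet hQ hC => mainAux M hdet hQ hC, ?_, ?_, ?_, ?_, ?_⟩
  · rw [show (!![1, 3; 0, -1] : Matrix (Fin 2) (Fin 2) ℤ).det = -1 from by
      simp [Matrix.det_fin_two_of]]
    exact isUnit_one.neg
  · decide
  · rintro v ⟨hv1, hv2⟩
    constructor <;>
      (simp [Matrix.mulVec, dotProduct, Fin.sum_univ_two]; linarith)
  · decide
  · decide
end

section
/- For odd d > 0, the equation a² - (d²+4)b² = -4 has (d,1) as the solution in smallest positive integers, and if (a,b) is a positive solution and (a',b') = ((ad² + 2a + bd³ + 4bd)/2, (ad + bd² + 2b)/2), then (a',b') is also a positive integer solution. -/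
/-- For odd d > 0: (d,1) is the smallest positive solution of a² - (d²+4)b² = -4,
and the recurrence (a,b) ↦ ((ad² + 2a + bd³ + 4bd)/2, (ad + bd² + 2b)/2) produces
a new positive integer solution from any positive solution. -/
theorem stmt_9 (d : ℤ) (hd : Odd d) (hpos : 0 < d) :
    (d^2 - (d^2 + 4)*1^2 = -4) ∧
    (∀ a b : ℤ, 0 < a → 0 < b → a^2 - (d^2 + 4)*b^2 = -4 → d ≤ a ∧ 1 ≤ b) ∧
    (∀ a b : ℤ, 0 < a → 0 < b → a^2 - (d^2 + 4)*b^2 = -4 →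
      ∃ a' b' : ℤ, 0 < a' ∧ 0 < b' ∧
        2*a' = a*d^2 + 2*a + b*d^3 + 4*b*d ∧
        2*b' = a*d + b*d^2 + 2*b ∧
        a'^2 - (d^2 + 4)*b'^2 = -4) := by
  refine ⟨by ring, ?_, ?_⟩
  · intro a b ha hb heq
    refine ⟨?_, hb⟩
    nlinarith [sq_nonneg (a - d), sq_nonneg (b - 1), sq_nonneg (a*b - d)]
  · intro a b ha hb heq
    -- parity: a and b have the same parity
    have hd2 : Even (d^2 + 3) := by
      obtain ⟨k, hk⟩ := hd
      exact ⟨2*k^2 + 2*k + 2, by rw [hk]; ring⟩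
    have h2 : Even (a^2 - b^2) := by
      have h3 : a^2 - b^2 = (d^2 + 3)*b^2 - 4 := by linarith
      rw [h3]
      exact (hd2.mul_right _).sub (by decide)
    have hab : Even a ↔ Even b := by
      have h4 := Int.even_sub.mp h2
      constructor
      · intro h
        exact (Int.even_pow.mp (h4.mp (Int.even_pow.mpr ⟨h, two_ne_zero⟩))).1
      · intro h
        exact (Int.even_pow.mp (h4.mpr (Int.even_pow.mpr ⟨h, two_ne_zero⟩))).1
    have habd : Even (a + b*d) := by
      obtain ⟨k, hk⟩ := hd
      rcases Int.even_or_odd a with h | h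
      · have hb2 := hab.mp h
        obtain ⟨x, hx⟩ := h; obtain ⟨y, hy⟩ := hb2
        exact ⟨x + y*d, by rw [hx, hy]; ring⟩
      · have hb2 : Odd b := by
          rcases Int.even_or_odd b with h' | h'
          · exact absurd (hab.mpr h') (Int.not_even_iff_odd.mpr h)
          · exact h'
        obtain ⟨x, hx⟩ := h; obtain ⟨y, hy⟩ := hb2
        exact ⟨x + 2*y*k + y + k + 1, by rw [hx, hy, hk]; ring⟩
    obtain ⟨m, hm⟩ := habd
    have hmpos : 0 < m := by nlinarith
    have ha2 : a = 2*m - b*d := by linarith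
    subst ha2
    have hdm : 0 < d*m := mul_pos hpos hmpos
    have hbd : 0 < b*d := mul_pos hb hpos
    refine ⟨d*(d*m + b) + (2*m - b*d) + b*d, d*m + b, ?_, ?_, by ring, by ring, ?_⟩
    · have : 0 < d*(d*m + b) := mul_pos hpos (by linarith)
      linarith
    · linarith
    · linear_combination heq
end

section
/- For odd d > 0, every M ∈ GL₂(ℤ) with MᵀQ_dM = Q_d, where Q_d = [[2,d],[d,-2]], has the form R±_{(a,b)} = [[((2+d²)b ∓ da)/2, (-db ± a)/2],[(-db ± a)/2, b]] or S±_{(a,b)} = [[-b, (-db ± a)/2],[(-db ∓ a)/2, b]] for some integer solution (a,b) of a² - (d²+4)b² = -4. -/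
/-!
Multiplying `MᵀQM = Q` on the left by `adj(Mᵀ)` gives `det M • (Q * M) = adj(Mᵀ) * Q`, which is
linear in the entries of `M = [[p, q], [r, s]]`: for `det M = 1` it forces `r = q`, `p = s - d q`,
and for `det M = -1` it forces `p = -s`, `r = -q - d s`. The `(1,1)` entry of the isometry
equation reads `q² + d q s - s² = -1`, so `(a, b) = (2q + d s, s)` solves `a² - (d² + 4) b² = -4`,
and `M` is `R⁺` resp. `S⁺` of this solution.
-/

open Matrix

theorem Matrix.det_smul_mul_eq_adjugate_transpose_mul {n R : Type*} [Fintype n] [DecidableEq n]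
    [CommRing R] {M Q : Matrix n n R} (h : Mᵀ * Q * M = Q) :
    M.det • (Q * M) = (Mᵀ).adjugate * Q := by
  conv_rhs => rw [← h, Matrix.mul_assoc, ← Matrix.mul_assoc (Mᵀ).adjugate, adjugate_mul,
    det_transpose, smul_one_mul]

section TwoByTwo

variable {d p q r s : ℤ}

lemma sq_add_mul_sub_sq_eq_neg_one_of_isometry
    (h : !![p, q; r, s]ᵀ * !![2, d; d, -2] * !![p, q; r, s] = !![2, d; d, -2]) :
    q ^ 2 + d * q * s - s ^ 2 = -1 := by
  have h11 := congrFun₂ h 1 1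
  simp only [Matrix.mul_apply, Fin.sum_univ_two, transpose_apply, of_apply, cons_val',
    cons_val_zero, cons_val_one, cons_val_fin_one] at h11
  exact mul_left_cancel₀ two_ne_zero (by linear_combination h11)

lemma det_mul_eq_of_isometry
    (h : !![p, q; r, s]ᵀ * !![2, d; d, -2] * !![p, q; r, s] = !![2, d; d, -2]) :
    !![p, q; r, s].det * (2 * p + d * r) = 2 * s - d * r ∧
      !![p, q; r, s].det * (2 * q + d * s) = d * s + 2 * r := by
  have key := det_smul_mul_eq_adjugate_transpose_mul h
  have k00 := congrFun₂ key 0 0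
  have k01 := congrFun₂ key 0 1
  simp only [adjugate_fin_two, Matrix.mul_apply, Matrix.smul_apply, smul_eq_mul,
    Fin.sum_univ_two, transpose_apply, of_apply, cons_val', cons_val_zero, cons_val_one,
    cons_val_fin_one] at k00 k01
  exact ⟨by linear_combination k00, by linear_combination k01⟩

end TwoByTwo

theorem stmt_10_general (d : ℤ) :
    ∀ M : Matrix (Fin 2) (Fin 2) ℤ, IsUnit M.det →
      Mᵀ * !![2, d; d, -2] * M = !![2, d; d, -2] →
      ∃ a b : ℤ, a^2 - (d^2 + 4)*b^2 = -4 ∧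
        ((2:ℤ) • M = !![(2 + d^2)*b - d*a, -d*b + a; -d*b + a, 2*b] ∨
         (2:ℤ) • M = !![(2 + d^2)*b + d*a, -d*b - a; -d*b - a, 2*b] ∨
         (2:ℤ) • M = !![-2*b, -d*b + a; -d*b - a, 2*b] ∨
         (2:ℤ) • M = !![-2*b, -d*b - a; -d*b + a, 2*b]) := by
  intro M hu h
  obtain ⟨p, q, r, s, rfl⟩ : ∃ p q r s, M = !![p, q; r, s] := ⟨_, _, _, _, M.eta_fin_two⟩
  refine ⟨2 * q + d * s, s,
    by linear_combination 4 * sq_add_mul_sub_sq_eq_neg_one_of_isometry h, ?_⟩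
  obtain ⟨h00, h01⟩ := det_mul_eq_of_isometry h
  simp only [smul_of, smul_cons, smul_eq_mul, smul_empty]
  rcases Int.isUnit_iff.mp hu with hdet | hdet <;> rw [hdet] at h00 h01
  · obtain rfl : q = r := by linarith
    obtain rfl : p = s - d * q := by linarith
    left
    ring_nf
  · obtain rfl : p = -s := by linarith
    obtain rfl : r = -q - d * s := by linarith
    right; right; left
    ring_nf

/-- For odd d > 0, every M ∈ GL₂(ℤ) with MᵀQ_dM = Q_d, Q_d = [[2,d],[d,-2]], has the
form R±_{(a,b)} or S±_{(a,b)} for an integer solution (a,b) of a² - (d²+4)b² = -4.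
(Equalities are stated after clearing the denominator 2.) -/
theorem stmt_10 (d : ℤ) (hd : Odd d) (hpos : 0 < d) :
    ∀ M : Matrix (Fin 2) (Fin 2) ℤ, IsUnit M.det →
      Mᵀ * !![2, d; d, -2] * M = !![2, d; d, -2] →
      ∃ a b : ℤ, a^2 - (d^2 + 4)*b^2 = -4 ∧
        ((2:ℤ) • M = !![(2 + d^2)*b - d*a, -d*b + a; -d*b + a, 2*b] ∨
         (2:ℤ) • M = !![(2 + d^2)*b + d*a, -d*b - a; -d*b - a, 2*b] ∨
         (2:ℤ) • M = !![-2*b, -d*b + a; -d*b - a, 2*b] ∨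
         (2:ℤ) • M = !![-2*b, -d*b - a; -d*b + a, 2*b]) :=
  stmt_10_general d
end
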